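/- Let F be 2γ-replacement-stable and satisfy 0 ≤ F(S,o) ≤ λ for all S ∈ O^M and o ∈ O, and define the gap K(S) = R(S) − R_emp(S). Then K has bounded differences with constant 4γ + λ/M: for every S ∈ O^M, every m ∈ {1,…,M} and every o' ∈ O, |K(S) − K(S^{m←o'})| ≤ 4γ + λ/M. -/

import Mathlib

/-!
Changing one sample point moves the true risk by at most `2γ`, since the loss moves by at most
`2γ` pointwise. The empirical sum `∑ᵢ F(S, Zᵢ)` changes in two ways: every summand feels the new
model, costing `2γ` each, and the `m`-th summand is moreover evaluated at `o'` instead of `Z_m`,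
costing at most `λ` because the loss takes values in `[0, λ]`. Dividing by `M` gives `2γ + λ/M`.
-/

open MeasureTheory

theorem Fintype.sum_comp_update {ι β G : Type*} [Fintype ι] [DecidableEq ι] [AddCommGroup G]
    (g : β → G) (S : ι → β) (m : ι) (b : β) :
    ∑ i, g (Function.update S m b i) = ∑ i, g (S i) - g (S m) + g b := by
  have hupdate := Finset.sum_update_of_mem (Finset.mem_univ m) (g ∘ S) (g b)
  rw [← Function.comp_update] at hupdate
  simp only [Function.comp_apply] at hupdate
  rw [hupdate, Finset.sum_eq_sum_sdiff_singleton_add (Finset.mem_univ m) (fun i => g (S i))]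
  abel

theorem abs_integral_sub_integral_le {α : Type*} [MeasurableSpace α] {μ : Measure α}
    [IsProbabilityMeasure μ] {f g : α → ℝ} {c : ℝ} (hf : Integrable f μ) (hg : Integrable g μ)
    (h : ∀ᵐ x ∂μ, |f x - g x| ≤ c) :
    |∫ x, f x ∂μ - ∫ x, g x ∂μ| ≤ c := by
  rw [← integral_sub hf hg]
  simpa using norm_integral_le_of_norm_le_const (f := fun x => f x - g x) (μ := μ) h

namespace ReplacementStability

variable {O : Type*} {M : ℕ}

noncomputable def risk [MeasurableSpace O] (μ : Measure O) (F : (Fin M → O) → O → ℝ) (S : Fin M → O) : ℝ :=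
  ∫ o, F S o ∂μ

noncomputable def empiricalRisk (F : (Fin M → O) → O → ℝ) (S : Fin M → O) : ℝ :=
  (1 / (M : ℝ)) * ∑ i, F S (S i)

variable {F : (Fin M → O) → O → ℝ} {γ lam : ℝ} {S : Fin M → O} {m : Fin M} {o' : O}

theorem integrable_of_measurable_uncurry [MeasurableSpace O] (μ : Measure O)
    [IsFiniteMeasure μ] (hF : Measurable (Function.uncurry F)) (hF0 : ∀ S o, 0 ≤ F S o)
    (hFlam : ∀ S o, F S o ≤ lam) (T : Fin M → O) : Integrable (F T) μ :=
  Integrable.of_bound hF.of_uncurry_left.aestronglyMeasurable lam <|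
    Filter.Eventually.of_forall fun o => by
      rw [Real.norm_eq_abs, abs_of_nonneg (hF0 T o)]
      exact hFlam T o

theorem abs_risk_sub_risk_update_le [MeasurableSpace O] (μ : Measure O) [IsProbabilityMeasure μ]
    (hF : Measurable (Function.uncurry F)) (hF0 : ∀ S o, 0 ≤ F S o)
    (hFlam : ∀ S o, F S o ≤ lam)
    (hstab : ∀ o, |F S o - F (Function.update S m o') o| ≤ 2 * γ) :
    |risk μ F S - risk μ F (Function.update S m o')| ≤ 2 * γ :=
  abs_integral_sub_integral_le (integrable_of_measurable_uncurry μ hF hF0 hFlam _)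
    (integrable_of_measurable_uncurry μ hF hF0 hFlam _) (Filter.Eventually.of_forall hstab)

theorem abs_sum_sub_sum_update_le (hF0 : ∀ S o, 0 ≤ F S o) (hFlam : ∀ S o, F S o ≤ lam)
    (hstab : ∀ o, |F S o - F (Function.update S m o') o| ≤ 2 * γ) :
    |∑ i, F S (S i) - ∑ i, F (Function.update S m o') (Function.update S m o' i)|
      ≤ M * (2 * γ) + lam := by
  set S' := Function.update S m o'
  have hsplit : ∑ i, F S (S i) - ∑ i, F S' (S' i)
      = ∑ i, (F S (S i) - F S' (S i)) + (F S' (S m) - F S' o') := by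
    rw [Fintype.sum_comp_update, Finset.sum_sub_distrib]
    ring
  have hmodel : |∑ i, (F S (S i) - F S' (S i))| ≤ M * (2 * γ) :=
    calc |∑ i, (F S (S i) - F S' (S i))|
        ≤ ∑ i, |F S (S i) - F S' (S i)| := Finset.abs_sum_le_sum_abs _ _
      _ ≤ ∑ _i : Fin M, 2 * γ := Finset.sum_le_sum fun i _ => hstab (S i)
      _ = M * (2 * γ) := by simp
  have hpoint : |F S' (S m) - F S' o'| ≤ lam :=
    abs_sub_le_of_nonneg_of_le (hF0 _ _) (hFlam _ _) (hF0 _ _) (hFlam _ _)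
  rw [hsplit]
  exact (abs_add_le _ _).trans (add_le_add hmodel hpoint)

theorem abs_empiricalRisk_sub_empiricalRisk_update_le (hF0 : ∀ S o, 0 ≤ F S o)
    (hFlam : ∀ S o, F S o ≤ lam)
    (hstab : ∀ o, |F S o - F (Function.update S m o') o| ≤ 2 * γ) :
    |empiricalRisk F S - empiricalRisk F (Function.update S m o')| ≤ 2 * γ + lam / M := by
  have hM : (0 : ℝ) < M := Nat.cast_pos.mpr m.pos
  rw [empiricalRisk, empiricalRisk, ← mul_sub, abs_mul, abs_of_pos (one_div_pos.mpr hM)]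
  calc 1 / (M : ℝ) * |∑ i, F S (S i) - ∑ i, F (Function.update S m o') (Function.update S m o' i)|
      ≤ 1 / (M : ℝ) * (M * (2 * γ) + lam) := by
        gcongr
        exact abs_sum_sub_sum_update_le hF0 hFlam hstab
    _ = 2 * γ + lam / M := by field_simp

end ReplacementStability

open ReplacementStability in
theorem gap_bounded_differences_general
    {O : Type*} [MeasurableSpace O] (μ : Measure O) [IsProbabilityMeasure μ]
    (M : ℕ)
    (F : (Fin M → O) → O → ℝ) (hF : Measurable (Function.uncurry F))
    (γ lam : ℝ)
    (hstab : ∀ (S : Fin M → O) (m : Fin M) (o' o : O),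
      |F S o - F (Function.update S m o') o| ≤ 2 * γ)
    (hF0 : ∀ S o, 0 ≤ F S o) (hFlam : ∀ S o, F S o ≤ lam)
    (S : Fin M → O) (m : Fin M) (o' : O) :
    |(((∫ o, F S o ∂μ) - (1 / (M : ℝ)) * ∑ i : Fin M, F S (S i)) -
        ((∫ o, F (Function.update S m o') o ∂μ) -
          (1 / (M : ℝ)) *
            ∑ i : Fin M, F (Function.update S m o') (Function.update S m o' i)))|
      ≤ 4 * γ + lam / M := by
  set S' := Function.update S m o'
  have hrisk := abs_risk_sub_risk_update_le μ hF hF0 hFlam (hstab S m o')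
  have hemp := abs_empiricalRisk_sub_empiricalRisk_update_le hF0 hFlam (hstab S m o')
  calc |(risk μ F S - empiricalRisk F S) - (risk μ F S' - empiricalRisk F S')|
      = |(risk μ F S - risk μ F S') - (empiricalRisk F S - empiricalRisk F S')| := by ring_nf
    _ ≤ |risk μ F S - risk μ F S'| + |empiricalRisk F S - empiricalRisk F S'| := abs_sub _ _
    _ ≤ 4 * γ + lam / M := by linarith

/-- the generalization gap `K(S) = R(S) - R_emp(S)` of a 2γ-replacement-stable,
bounded expected-loss function has bounded differences with constant `4γ + λ/M`. -/
theorem gap_bounded_differences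
    {O : Type*} [MeasurableSpace O] (μ : Measure O) [IsProbabilityMeasure μ]
    (M : ℕ) (hM : 1 ≤ M)
    (F : (Fin M → O) → O → ℝ) (hF : Measurable (Function.uncurry F))
    (γ lam : ℝ) (hγ : 0 ≤ γ)
    (hstab : ∀ (S : Fin M → O) (m : Fin M) (o' o : O),
      |F S o - F (Function.update S m o') o| ≤ 2 * γ)
    (hF0 : ∀ S o, 0 ≤ F S o) (hFlam : ∀ S o, F S o ≤ lam)
    (S : Fin M → O) (m : Fin M) (o' : O) :
    |(((∫ o, F S o ∂μ) - (1 / (M : ℝ)) * ∑ i : Fin M, F S (S i)) -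
        ((∫ o, F (Function.update S m o') o ∂μ) -
          (1 / (M : ℝ)) *
            ∑ i : Fin M, F (Function.update S m o') (Function.update S m o' i)))|
      ≤ 4 * γ + lam / M :=
  gap_bounded_differences_general μ M F hF γ lam hstab hF0 hFlam S m o'
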